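/- Let Ṽ_p ∈ ℝ^{n1×p} have orthonormal columns and suppose A = Σ G_i ⊗ K_i is symmetric positive definite. Then the PGD-update problem min over W ∈ ℝ^{n2×p} of J_A(Ṽ_p, W) = ½‖U − Ṽ_p Wᵀ‖_A² has a unique minimizer W̄_p, characterized by the reduced equation Σ_{i=0}^m (Ṽ_pᵀ K_i Ṽ_p) W̄_pᵀ G_iᵀ = Ṽ_pᵀ B. -/

import Mathlib

open Matrix Kronecker

/-- The trace pairing `⟨X, Y⟩ = tr(Xᵀ Y)`. -/
def traceIP {a b : ℕ} (X Y : Matrix (Fin a) (Fin b) ℝ) : ℝ :=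
  Matrix.trace (Xᵀ * Y)

/-- The linear operator `𝒜(X) = Σ_{i=0}^m K_i X G_iᵀ`. -/
def opA {n1 n2 m : ℕ} (K : Fin (m + 1) → Matrix (Fin n1) (Fin n1) ℝ)
    (G : Fin (m + 1) → Matrix (Fin n2) (Fin n2) ℝ)
    (X : Matrix (Fin n1) (Fin n2) ℝ) : Matrix (Fin n1) (Fin n2) ℝ :=
  ∑ i, K i * X * (G i)ᵀ

/-- The objective `J_A(V, W) = ½ ‖U − V Wᵀ‖_A²`. -/
noncomputable def JA {n1 n2 m p : ℕ} (K : Fin (m + 1) → Matrix (Fin n1) (Fin n1) ℝ)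
    (G : Fin (m + 1) → Matrix (Fin n2) (Fin n2) ℝ)
    (U : Matrix (Fin n1) (Fin n2) ℝ)
    (V : Matrix (Fin n1) (Fin p) ℝ) (W : Matrix (Fin n2) (Fin p) ℝ) : ℝ :=
  (1 / 2) * traceIP (opA K G (U - V * Wᵀ)) (U - V * Wᵀ)

/-! With `a(X, Y) = ⟨𝒜 X, Y⟩`, the identity `vec (𝒜 X) = A vec X` for `A = Σ G_i ⊗ K_i`
shows that `a` is the inner product of the symmetric positive definite matrix `A` read
through `vec`. Hence `J_A(V, ·)` is the energy `½ a(U − f W, U − f W)` of the linear map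
`f W = V Wᵀ`, which is injective because `Vᵀ V = 1`. Such an energy is minimized exactly at
the Galerkin solutions, `a(U − f W, f W') = 0` for all `W'`, and there is exactly one of them:
`W ↦ a(f W, f ·)` is an injective, hence bijective, linear map from a finite-dimensional space
to its dual. Since `a(E, V W'ᵀ) = ⟨W', (Vᵀ 𝒜 E)ᵀ⟩` and `𝒜 U = B`, the Galerkin condition is
the reduced equation. -/

namespace LinearMap.BilinForm

variable {𝕜 E F : Type*} [Field 𝕜] [AddCommGroup E] [Module 𝕜 E] [AddCommGroup F] [Module 𝕜 F]
  (a : LinearMap.BilinForm 𝕜 E) (f : F →ₗ[𝕜] E) (u : E)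

def energy (w : F) : 𝕜 := (1 / 2) * a (u - f w) (u - f w)

variable {a}

theorem existsUnique_orthogonal [FiniteDimensional 𝕜 F] (ha : ∀ x, x ≠ 0 → a x x ≠ 0)
    (hf : Function.Injective f) : ∃! w, ∀ v, a (u - f w) (f v) = 0 := by
  set b : LinearMap.BilinForm 𝕜 F := a.compl₁₂ f f
  have hb_aniso : ∀ w, b w w = 0 → w = 0 := fun w hw =>
    by_contra fun hw₀ => ha (f w) ((map_ne_zero_iff f hf).mpr hw₀) hw
  have hb : b.Nondegenerate := ⟨fun w hw => hb_aniso w (hw w), fun w hw => hb_aniso w (hw w)⟩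
  have horth_iff : ∀ w, (∀ v, a (u - f w) (f v) = 0) ↔ b.toDual hb w = (a u).comp f := by
    intro w
    simp only [LinearMap.ext_iff, toDual_def, b, compl₁₂_apply, LinearMap.comp_apply, map_sub,
      LinearMap.sub_apply]
    exact forall_congr' fun v => sub_eq_zero.trans eq_comm
  simpa only [horth_iff] using (b.toDual hb).bijective.existsUnique ((a u).comp f)

variable [LinearOrder 𝕜] [IsStrictOrderedRing 𝕜]

theorem energy_add (ha : a.IsSymm) (w v : F) :
    energy a f u (w + v) = energy a f u w - a (u - f w) (f v) + 1 / 2 * a (f v) (f v) := by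
  have hsymm := ha.eq (f v) (u - f w)
  rw [energy, energy, map_add, sub_add_eq_sub_sub]
  simp only [map_sub, LinearMap.sub_apply] at hsymm ⊢
  linear_combination (-1 / 2 : 𝕜) * hsymm

theorem forall_energy_le_iff (ha : a.IsSymm) (ha₀ : ∀ x, 0 ≤ a x x) (w : F) :
    (∀ w', energy a f u w ≤ energy a f u w') ↔ ∀ v, a (u - f w) (f v) = 0 := by
  refine ⟨fun hmin v => ?_, fun horth w' => ?_⟩
  · -- `t ↦ energy (w + t • v) - energy w` is a nonnegative quadratic without constant term,
    -- so its discriminant, the square of the linear coefficient, is nonpositive.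
    have hquad : ∀ t : 𝕜,
        0 ≤ 1 / 2 * a (f v) (f v) * (t * t) + -a (u - f w) (f v) * t + 0 := fun t => by
      have := hmin (w + t • v)
      simp only [energy_add f u ha, map_smul, LinearMap.smul_apply, smul_eq_mul] at this
      linarith
    have hdiscrim := discrim_le_zero hquad
    rw [discrim] at hdiscrim
    nlinarith [sq_nonneg (a (u - f w) (f v))]
  · rw [← add_sub_cancel w w', energy_add f u ha, horth]
    linarith [ha₀ (f (w' - w))]

theorem existsUnique_forall_energy_le [FiniteDimensional 𝕜 F] (ha : a.IsSymm)
    (ha₀ : ∀ x, x ≠ 0 → 0 < a x x) (hf : Function.Injective f) :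
    ∃! w, ∀ w', energy a f u w ≤ energy a f u w' := by
  have ha_nonneg : ∀ x, 0 ≤ a x x := fun x => by
    rcases eq_or_ne x 0 with rfl | hx
    · simp
    · exact (ha₀ x hx).le
  simpa only [forall_energy_le_iff f u ha ha_nonneg] using
    existsUnique_orthogonal f u (fun x hx => (ha₀ x hx).ne') hf

end LinearMap.BilinForm

section TraceInnerProduct

variable {a b : ℕ}

theorem traceIP_eq_vec_dotProduct (X Y : Matrix (Fin a) (Fin b) ℝ) :
    traceIP X Y = vec X ⬝ᵥ vec Y :=
  (vec_dotProduct_vec X Y).symm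

theorem forall_traceIP_eq_zero_iff {M : Matrix (Fin a) (Fin b) ℝ} :
    (∀ W, traceIP W M = 0) ↔ M = 0 := by
  refine ⟨fun h => ?_, fun h W => by simp [h, traceIP]⟩
  rw [← vec_eq_zero_iff, ← dotProduct_self_eq_zero, ← traceIP_eq_vec_dotProduct]
  exact h M

theorem traceIP_mul_transpose {c : ℕ} (X : Matrix (Fin a) (Fin b) ℝ)
    (V : Matrix (Fin a) (Fin c) ℝ) (W : Matrix (Fin b) (Fin c) ℝ) :
    traceIP X (V * Wᵀ) = traceIP W (Xᵀ * V) := by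
  rw [traceIP, traceIP, ← Matrix.mul_assoc, trace_mul_comm]

end TraceInnerProduct

section EnergyForm

variable {n1 n2 m : ℕ} (K : Fin (m + 1) → Matrix (Fin n1) (Fin n1) ℝ)
  (G : Fin (m + 1) → Matrix (Fin n2) (Fin n2) ℝ)

theorem vec_opA (X : Matrix (Fin n1) (Fin n2) ℝ) :
    vec (opA K G X) = (∑ i, G i ⊗ₖ K i) *ᵥ vec X := by
  simp only [opA, vec_sum, sum_mulVec, kronecker_mulVec_vec]

theorem traceIP_opA (X Y : Matrix (Fin n1) (Fin n2) ℝ) :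
    traceIP (opA K G X) Y = (∑ i, G i ⊗ₖ K i) *ᵥ vec X ⬝ᵥ vec Y := by
  rw [traceIP_eq_vec_dotProduct, vec_opA]

theorem opA_sub (X Y : Matrix (Fin n1) (Fin n2) ℝ) :
    opA K G (X - Y) = opA K G X - opA K G Y := by
  simp only [opA, Matrix.mul_sub, Matrix.sub_mul, Finset.sum_sub_distrib]

def opAForm : LinearMap.BilinForm ℝ (Matrix (Fin n1) (Fin n2) ℝ) :=
  LinearMap.mk₂ ℝ (fun X Y => traceIP (opA K G X) Y)
    (fun X X' Y => by simp only [traceIP_opA, vec_add, mulVec_add, add_dotProduct])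
    (fun c X Y => by simp only [traceIP_opA, vec_smul, mulVec_smul, smul_dotProduct])
    (fun X Y Y' => by simp only [traceIP_opA, vec_add, dotProduct_add])
    (fun c X Y => by simp only [traceIP_opA, vec_smul, dotProduct_smul])

theorem opAForm_apply (X Y : Matrix (Fin n1) (Fin n2) ℝ) :
    opAForm K G X Y = traceIP (opA K G X) Y :=
  rfl

variable {K G}

theorem opAForm_isSymm (hA : (∑ i, G i ⊗ₖ K i).IsSymm) : (opAForm K G).IsSymm := by
  refine ⟨fun X Y => ?_⟩
  rw [opAForm_apply, opAForm_apply, traceIP_opA, traceIP_opA, dotProduct_comm,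
    dotProduct_mulVec, ← vecMul_transpose, hA.eq]

theorem opAForm_pos (hA : (∑ i, G i ⊗ₖ K i).PosDef) {X : Matrix (Fin n1) (Fin n2) ℝ}
    (hX : X ≠ 0) : 0 < opAForm K G X X := by
  rw [opAForm_apply, traceIP_opA, dotProduct_comm]
  simpa using hA.dotProduct_mulVec_pos (vec_eq_zero_iff.not.mpr hX)

theorem opAForm_nonneg (hA : (∑ i, G i ⊗ₖ K i).PosSemidef)
    (X : Matrix (Fin n1) (Fin n2) ℝ) : 0 ≤ opAForm K G X X := by
  rw [opAForm_apply, traceIP_opA, dotProduct_comm]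
  simpa using hA.dotProduct_mulVec_nonneg (vec X)

theorem transpose_mul_opA_mul_transpose {p : ℕ} (V : Matrix (Fin n1) (Fin p) ℝ)
    (W : Matrix (Fin n2) (Fin p) ℝ) :
    Vᵀ * opA K G (V * Wᵀ) = ∑ i, (Vᵀ * K i * V) * Wᵀ * (G i)ᵀ := by
  simp only [opA, Matrix.mul_sum, Matrix.mul_assoc]

theorem opAForm_orthogonal_iff {p : ℕ} {U B : Matrix (Fin n1) (Fin n2) ℝ} (hU : opA K G U = B)
    (V : Matrix (Fin n1) (Fin p) ℝ) (W : Matrix (Fin n2) (Fin p) ℝ) :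
    (∀ W' : Matrix (Fin n2) (Fin p) ℝ, opAForm K G (U - V * Wᵀ) (V * W'ᵀ) = 0) ↔
      ∑ i, (Vᵀ * K i * V) * Wᵀ * (G i)ᵀ = Vᵀ * B := by
  simp only [opAForm_apply, traceIP_mul_transpose]
  rw [forall_traceIP_eq_zero_iff, ← transpose_eq_zero, transpose_mul, transpose_transpose,
    opA_sub, Matrix.mul_sub, hU, transpose_mul_opA_mul_transpose, sub_eq_zero, eq_comm]

end EnergyForm

section MulTranspose

variable {R l m n : Type*} [CommSemiring R] [Fintype n]

def mulTransposeₗ (V : Matrix m n R) : Matrix l n R →ₗ[R] Matrix m l R where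
  toFun W := V * Wᵀ
  map_add' W W' := by rw [transpose_add, Matrix.mul_add]
  map_smul' c W := by rw [transpose_smul, Matrix.mul_smul, RingHom.id_apply]

theorem mulTransposeₗ_apply (V : Matrix m n R) (W : Matrix l n R) :
    mulTransposeₗ V W = V * Wᵀ :=
  rfl

theorem mulTransposeₗ_injective [Fintype m] [DecidableEq n] {V : Matrix m n R}
    (hV : Vᵀ * V = 1) : Function.Injective (mulTransposeₗ (l := l) V) := by
  intro W W' h
  have := congrArg (fun X => (Vᵀ * X)ᵀ) h
  simpa only [mulTransposeₗ_apply, ← Matrix.mul_assoc, hV, Matrix.one_mul,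
    transpose_transpose] using this

end MulTranspose

theorem pgd_update_unique_minimizer_general {n1 n2 m p : ℕ}
    (K : Fin (m + 1) → Matrix (Fin n1) (Fin n1) ℝ)
    (G : Fin (m + 1) → Matrix (Fin n2) (Fin n2) ℝ)
    (hA : (∑ i, (G i) ⊗ₖ (K i)).PosDef)
    (U B : Matrix (Fin n1) (Fin n2) ℝ) (hU : opA K G U = B)
    (V : Matrix (Fin n1) (Fin p) ℝ) (hV : Vᵀ * V = 1) :
    (∃! Wb : Matrix (Fin n2) (Fin p) ℝ,
        ∀ W' : Matrix (Fin n2) (Fin p) ℝ, JA K G U V Wb ≤ JA K G U V W') ∧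
    (∀ Wb : Matrix (Fin n2) (Fin p) ℝ,
        (∀ W' : Matrix (Fin n2) (Fin p) ℝ, JA K G U V Wb ≤ JA K G U V W') ↔
          ∑ i, (Vᵀ * K i * V) * Wbᵀ * (G i)ᵀ = Vᵀ * B) := by
  have hJ : ∀ W,
      JA K G U V W = LinearMap.BilinForm.energy (opAForm K G) (mulTransposeₗ V) U W :=
    fun _ => rfl
  have hsymm := opAForm_isSymm (isHermitian_iff_isSymm.mp hA.isHermitian)
  simp only [hJ]
  exact ⟨LinearMap.BilinForm.existsUnique_forall_energy_le _ U hsymm (fun _ => opAForm_pos hA)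
      (mulTransposeₗ_injective hV),
    fun W => (LinearMap.BilinForm.forall_energy_le_iff _ U hsymm
      (opAForm_nonneg hA.posSemidef) W).trans (opAForm_orthogonal_iff hU V W)⟩

theorem pgd_update_unique_minimizer {n1 n2 m p : ℕ}
    (K : Fin (m + 1) → Matrix (Fin n1) (Fin n1) ℝ)
    (G : Fin (m + 1) → Matrix (Fin n2) (Fin n2) ℝ)
    (hK : ∀ i, (K i)ᵀ = K i) (hG : ∀ i, (G i)ᵀ = G i)
    (hA : (∑ i, (G i) ⊗ₖ (K i)).PosDef)
    (U B : Matrix (Fin n1) (Fin n2) ℝ) (hU : opA K G U = B)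
    (V : Matrix (Fin n1) (Fin p) ℝ) (hV : Vᵀ * V = 1) :
    (∃! Wb : Matrix (Fin n2) (Fin p) ℝ,
        ∀ W' : Matrix (Fin n2) (Fin p) ℝ, JA K G U V Wb ≤ JA K G U V W') ∧
    (∀ Wb : Matrix (Fin n2) (Fin p) ℝ,
        (∀ W' : Matrix (Fin n2) (Fin p) ℝ, JA K G U V Wb ≤ JA K G U V W') ↔
          ∑ i, (Vᵀ * K i * V) * Wbᵀ * (G i)ᵀ = Vᵀ * B) :=
  pgd_update_unique_minimizer_general K G hA U B hU V hV
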